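/- Let n be a positive integer and let y_1 ≥ y_2 ≥ ⋯ ≥ y_n ≥ 0 be real numbers. Let Z_1, …, Z_n be independent random variables each uniformly distributed on {−1, +1}. Then E[max_{i∈[n]} Z_i · y_i] = Σ_{k=1}^{n−1} 2^{−k} · y_k (the empty sum being 0 when n = 1). -/

import Mathlib

/-!
If `k` is the first index with `Z k = 1`, then, `y` being antitone and nonnegative, the maximum
of `Z i * y i` is `y k`; if there is no such index it is `-y (n-1)`. By independence the first `+1`
sits at `k` with probability `2^{-(k+1)}` and all signs are `-1` with probability `2^{-n}`, so the
expectation is `∑_{k<n} 2^{-(k+1)} y k - 2^{-n} y (n-1)`, and the last two terms cancel.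
-/

open MeasureTheory ProbabilityTheory
open scoped ENNReal

lemma measurableSet_setOf_forall_mem_eq {ι : Type*} (s : Finset ι) (c : ι → ℝ) :
    MeasurableSet {z : ι → ℝ | ∀ i ∈ s, z i = c i} := by
  have h : {z : ι → ℝ | ∀ i ∈ s, z i = c i} = ⋂ i ∈ s, {z | z i = c i} := by ext; simp
  exact h ▸ Finset.measurableSet_biInter s fun i _ ↦
    measurableSet_eq_fun (measurable_pi_apply i) measurable_const

section SignVector

variable {n : ℕ}

def firstOneAt (k : Fin n) : Set (Fin n → ℝ) :=
  {z | ∀ i ∈ Finset.Iic k, z i = if i = k then 1 else -1}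

def allNegOne : Set (Fin n → ℝ) := {z | ∀ i ∈ Finset.univ, z i = -1}

lemma measurableSet_firstOneAt (k : Fin n) : MeasurableSet (firstOneAt k) :=
  measurableSet_setOf_forall_mem_eq _ _

lemma measurableSet_allNegOne : MeasurableSet (allNegOne (n := n)) :=
  measurableSet_setOf_forall_mem_eq _ _

lemma mem_firstOneAt {k : Fin n} {z : Fin n → ℝ} :
    z ∈ firstOneAt k ↔ z k = 1 ∧ ∀ j < k, z j = -1 := by
  simp only [firstOneAt, Set.mem_ofPred_eq, Finset.mem_Iic]
  refine ⟨fun h ↦ ⟨by simpa using h k le_rfl, fun j hj ↦ by simpa [hj.ne] using h j hj.le⟩, ?_⟩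
  rintro ⟨hk, hlt⟩ i hi
  rcases hi.lt_or_eq with hi | rfl
  · simp [hi.ne, hlt i hi]
  · simp [hk]

lemma eq_of_mem_firstOneAt {k k' : Fin n} {z : Fin n → ℝ} (h : z ∈ firstOneAt k)
    (h' : z ∈ firstOneAt k') : k = k' := by
  rw [mem_firstOneAt] at h h'
  by_contra hne
  rcases lt_or_gt_of_ne hne with hlt | hlt
  · linarith [h.1, h'.2 k hlt]
  · linarith [h'.1, h.2 k' hlt]

variable {y z : Fin n → ℝ}

lemma iSup_mul_of_mem_firstOneAt (hy : Antitone y) (hy0 : ∀ i, 0 ≤ y i) (hz : ∀ i, z i ≤ 1)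
    {k : Fin n} (h : z ∈ firstOneAt k) : ⨆ i, z i * y i = y k := by
  rw [mem_firstOneAt] at h
  have : Nonempty (Fin n) := ⟨k⟩
  refine le_antisymm (ciSup_le fun i ↦ ?_)
    (le_ciSup_of_le (Set.finite_range _).bddAbove k (by simp [h.1]))
  rcases lt_or_ge i k with hik | hki
  · rw [h.2 i hik]
    linarith [hy0 i, hy0 k]
  · calc z i * y i ≤ 1 * y i := mul_le_mul_of_nonneg_right (hz i) (hy0 i)
      _ ≤ y k := by rw [one_mul]; exact hy hki

end SignVector

lemma iSup_mul_of_mem_allNegOne {m : ℕ} {y z : Fin (m + 1) → ℝ} (hy : Antitone y)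
    (h : z ∈ allNegOne) : ⨆ i, z i * y i = -y (Fin.last m) := by
  have hz : ∀ i, z i = -1 := fun i ↦ h i (Finset.mem_univ i)
  refine le_antisymm (ciSup_le fun i ↦ ?_)
    (le_ciSup_of_le (Set.finite_range _).bddAbove (Fin.last m) (by simp [hz]))
  simpa [hz] using hy (Fin.le_last i)

lemma iSup_mul_eq_sum_indicator {m : ℕ} {y z : Fin (m + 1) → ℝ} (hy : Antitone y)
    (hy0 : ∀ i, 0 ≤ y i) (hz : ∀ i, z i = -1 ∨ z i = 1) :
    ⨆ i, z i * y i = ∑ k, (firstOneAt k).indicator (fun _ ↦ y k) z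
      - allNegOne.indicator (fun _ ↦ y (Fin.last m)) z := by
  by_cases hone : ∃ k, z k = 1
  · obtain ⟨k, hk, hmin⟩ := exists_minimal_of_wellFoundedLT _ hone
    have hfirst : z ∈ firstOneAt k := mem_firstOneAt.2
      ⟨hk, fun j hj ↦ (hz j).resolve_right fun h1 ↦ (hmin h1 hj.le).not_gt hj⟩
    have hneg : z ∉ allNegOne := fun h ↦ by linarith [h k (Finset.mem_univ k)]
    have hz1 : ∀ i, z i ≤ 1 := fun i ↦ by rcases hz i with h | h <;> norm_num [h]
    rw [iSup_mul_of_mem_firstOneAt hy hy0 hz1 hfirst, Set.indicator_of_notMem hneg, sub_zero,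
      Finset.sum_eq_single_of_mem k (Finset.mem_univ k) fun k' _ hk' ↦
        Set.indicator_of_notMem (fun h ↦ hk' (eq_of_mem_firstOneAt h hfirst)) _,
      Set.indicator_of_mem hfirst]
  · push Not at hone
    have hneg : z ∈ allNegOne := fun i _ ↦ (hz i).resolve_right (hone i)
    rw [iSup_mul_of_mem_allNegOne hy hneg, Set.indicator_of_mem hneg,
      Finset.sum_eq_zero fun k _ ↦
        Set.indicator_of_notMem (fun h ↦ hone k (mem_firstOneAt.1 h).1) _, zero_sub]

noncomputable def rademacherMeasure : Measure ℝ :=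
  (2 : ℝ≥0∞)⁻¹ • Measure.dirac (-1) + (2 : ℝ≥0∞)⁻¹ • Measure.dirac 1

section Rademacher

variable {Ω : Type*} [MeasurableSpace Ω] {P : Measure Ω}

lemma measure_preimage_singleton_of_map_eq_rademacherMeasure {X : Ω → ℝ} (hX : Measurable X)
    (hlaw : P.map X = rademacherMeasure) {c : ℝ} (hc : c = -1 ∨ c = 1) : P (X ⁻¹' {c}) = 2⁻¹ := by
  rw [← Measure.map_apply hX (measurableSet_singleton c), hlaw, rademacherMeasure]
  rcases hc with rfl | rfl <;> norm_num

lemma ae_eq_neg_one_or_one_of_map_eq_rademacherMeasure {X : Ω → ℝ} (hX : Measurable X)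
    (hlaw : P.map X = rademacherMeasure) :
    ∀ᵐ ω ∂P, X ω = -1 ∨ X ω = 1 := by
  refine ae_of_ae_map (p := fun x ↦ x = -1 ∨ x = 1) hX.aemeasurable ?_
  simp [hlaw, rademacherMeasure, ae_dirac_eq]

lemma measureReal_forall_eq_of_iIndepFun_rademacher {ι : Type*} {Z : ι → Ω → ℝ}
    (hmeas : ∀ i, Measurable (Z i)) (hindep : iIndepFun Z P)
    (hlaw : ∀ i, P.map (Z i) = rademacherMeasure)
    (s : Finset ι) {c : ι → ℝ} (hc : ∀ i ∈ s, c i = -1 ∨ c i = 1) :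
    P.real {ω | ∀ i ∈ s, Z i ω = c i} = 2⁻¹ ^ s.card := by
  have hinter : {ω | ∀ i ∈ s, Z i ω = c i} = ⋂ i ∈ s, Z i ⁻¹' {c i} := by ext; simp
  have hprod : P {ω | ∀ i ∈ s, Z i ω = c i} = 2⁻¹ ^ s.card := by
    rw [hinter, hindep.measure_inter_preimage_eq_mul s fun i _ ↦ measurableSet_singleton (c i),
      Finset.prod_congr rfl fun i hi ↦
        measure_preimage_singleton_of_map_eq_rademacherMeasure (hmeas i) (hlaw i) (hc i hi),
      Finset.prod_const]
  simp [measureReal_def, hprod]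

theorem integral_iSup_mul_rademacher [IsProbabilityMeasure P] {m : ℕ}
    {Z : Fin (m + 1) → Ω → ℝ} (hmeas : ∀ i, Measurable (Z i)) (hindep : iIndepFun Z P)
    (hlaw : ∀ i, P.map (Z i) = rademacherMeasure)
    {y : Fin (m + 1) → ℝ} (hy : Antitone y) (hy0 : ∀ i, 0 ≤ y i) :
    ∫ ω, ⨆ i, Z i ω * y i ∂P =
      ∑ k : Fin (m + 1), (2⁻¹ : ℝ) ^ ((k : ℕ) + 1) * y k - 2⁻¹ ^ (m + 1) * y (Fin.last m) := by
  let Zv : Ω → Fin (m + 1) → ℝ := fun ω i ↦ Z i ω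
  have hZv : Measurable Zv := measurable_pi_lambda _ hmeas
  have hsign : ∀ᵐ ω ∂P, ∀ i, Z i ω = -1 ∨ Z i ω = 1 :=
    ae_all_iff.2 fun i ↦ ae_eq_neg_one_or_one_of_map_eq_rademacherMeasure (hmeas i) (hlaw i)
  have hint : ∀ {S : Set (Fin (m + 1) → ℝ)}, MeasurableSet S → ∀ a : ℝ,
      Integrable ((Zv ⁻¹' S).indicator fun _ ↦ a) P := fun hS a ↦
    (integrable_const a).indicator (hZv hS)
  have hfirst : ∀ k : Fin (m + 1), P.real (Zv ⁻¹' firstOneAt k) = 2⁻¹ ^ ((k : ℕ) + 1) := by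
    intro k
    rw [← Fin.card_Iic]
    refine measureReal_forall_eq_of_iIndepFun_rademacher hmeas hindep hlaw _ fun i _ ↦ ?_
    split_ifs <;> simp
  have hneg : P.real (Zv ⁻¹' allNegOne) = 2⁻¹ ^ (m + 1) := by
    simpa [allNegOne] using measureReal_forall_eq_of_iIndepFun_rademacher hmeas hindep hlaw
      Finset.univ (c := fun _ ↦ -1) fun i _ ↦ Or.inl rfl
  calc ∫ ω, ⨆ i, Z i ω * y i ∂P
      = ∫ ω, ∑ k, (Zv ⁻¹' firstOneAt k).indicator (fun _ ↦ y k) ω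
          - (Zv ⁻¹' allNegOne).indicator (fun _ ↦ y (Fin.last m)) ω ∂P :=
        integral_congr_ae (hsign.mono fun ω hω ↦ iSup_mul_eq_sum_indicator hy hy0 hω)
    _ = ∑ k, P.real (Zv ⁻¹' firstOneAt k) * y k
          - P.real (Zv ⁻¹' allNegOne) * y (Fin.last m) := by
        rw [integral_sub (integrable_finsetSum _ fun k _ ↦ hint (measurableSet_firstOneAt k) _)
            (hint measurableSet_allNegOne _),
          integral_finsetSum _ fun k _ ↦ hint (measurableSet_firstOneAt k) _]
        simp only [integral_indicator_const _ (hZv (measurableSet_firstOneAt _)),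
          integral_indicator_const _ (hZv measurableSet_allNegOne), smul_eq_mul]
    _ = _ := by simp only [hfirst, hneg]

end Rademacher

theorem expected_max_rademacher
    (n : ℕ) (hn : 0 < n)
    (Ω : Type) [MeasurableSpace Ω] (P : Measure Ω) [IsProbabilityMeasure P]
    (y : Fin n → ℝ) (hy : Antitone y) (hy0 : ∀ i, 0 ≤ y i)
    (Z : Fin n → Ω → ℝ) (hmeas : ∀ i, Measurable (Z i))
    (hindep : iIndepFun Z P)
    (hZ : ∀ i, Measure.map (Z i) P =
      (2 : ℝ≥0∞)⁻¹ • Measure.dirac (-1 : ℝ) + (2 : ℝ≥0∞)⁻¹ • Measure.dirac (1 : ℝ)) :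
    (∫ ω, ⨆ i, Z i ω * y i ∂P) =
      ∑ k : Fin (n - 1), (2 : ℝ) ^ (-((k : ℕ) : ℤ) - 1) * y (Fin.castLE (Nat.sub_le n 1) k) := by
  obtain ⟨m, rfl⟩ : ∃ m, n = m + 1 := ⟨n - 1, (Nat.succ_pred_eq_of_pos hn).symm⟩
  rw [integral_iSup_mul_rademacher hmeas hindep hZ hy hy0, Fin.sum_univ_castSucc, Fin.val_last,
    add_sub_cancel_right]
  refine Finset.sum_congr rfl fun k _ ↦ congrArg (· * _) ?_
  rw [← neg_add', zpow_neg, inv_pow]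
  norm_cast
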